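/- For any loopless matroids M₁ and M₂ on finite ground sets, the Kazhdan–Lusztig polynomial of their direct sum is the product of their Kazhdan–Lusztig polynomials: P_{M₁⊕M₂}(t) = P_{M₁}(t) · P_{M₂}(t). -/

import Mathlib

open scoped Classical

/-- A matroid on a finite ground set, presented by its rank function
(normalized, monotone, submodular, with unit increase). -/
structure FinMatroid where
  E : Type
  fintypeE : Fintype E
  deceqE : DecidableEq E
  rk : Finset E → ℕ
  rk_empty : rk ∅ = 0
  rk_mono : ∀ ⦃S T : Finset E⦄, S ⊆ T → rk S ≤ rk T
  rk_submod : ∀ S T : Finset E, rk (S ∪ T) + rk (S ∩ T) ≤ rk S + rk T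
  rk_insert_le : ∀ (S : Finset E) (x : E), rk (insert x S) ≤ rk S + 1

attribute [instance] FinMatroid.fintypeE FinMatroid.deceqE

namespace FinMatroid

/-- The rank of the matroid: the rank of the full ground set. -/
noncomputable def rank (M : FinMatroid) : ℕ := M.rk Finset.univ

/-- A flat: a set such that adding any new element increases the rank. -/
def IsFlat (M : FinMatroid) (F : Finset M.E) : Prop :=
  ∀ x ∉ F, M.rk (insert x F) ≠ M.rk F

/-- The (finite) collection of flats of `M`. -/
noncomputable def flats (M : FinMatroid) : Finset (Finset M.E) :=
  Finset.univ.filter M.IsFlat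

/-- A matroid is loopless if every singleton has rank 1. -/
def Loopless (M : FinMatroid) : Prop := ∀ x : M.E, M.rk {x} = 1

/-- The Möbius function of the lattice of flats of `M` (extended by the usual
recursion; `mu A B = 0` unless `A ⊆ B`). -/
noncomputable def mu (M : FinMatroid) (A B : Finset M.E) : ℤ :=
  if A = B then 1
  else -∑ G ∈ (M.flats.filter (fun G => A ⊆ G ∧ G ⊂ B)).attach,
        M.mu A G.1
termination_by B.card
decreasing_by
  exact Finset.card_lt_card (Finset.mem_filter.mp G.2).2.2

/-- The characteristic polynomial `χ_M(t) = ∑_{F flat} μ(∅,F) t^(rk M - rk F)`. -/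
noncomputable def charPoly (M : FinMatroid) : Polynomial ℤ :=
  ∑ F ∈ M.flats, Polynomial.C (M.mu ∅ F) * Polynomial.X ^ (M.rank - M.rk F)

/-- The localization `M_F`: the restriction of `M` to the set `F`. -/
noncomputable def localization (M : FinMatroid) (F : Finset M.E) : FinMatroid where
  E := {x : M.E // x ∈ F}
  fintypeE := inferInstance
  deceqE := inferInstance
  rk S := M.rk (S.map (Function.Embedding.subtype _))
  rk_empty := by simpa using M.rk_empty
  rk_mono := fun S T h => M.rk_mono (Finset.map_subset_map.mpr h)
  rk_submod := fun S T => by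
    try dsimp only
    rw [Finset.map_union, Finset.map_inter]
    exact M.rk_submod _ _
  rk_insert_le := fun S x => by
    try dsimp only
    rw [Finset.map_insert]
    exact M.rk_insert_le _ _

/-- The restriction `M^F` (the contraction of `M` by the flat `F`), a matroid on
the complement of `F`. -/
noncomputable def restrictionAt (M : FinMatroid) (F : Finset M.E) : FinMatroid where
  E := {x : M.E // x ∉ F}
  fintypeE := inferInstance
  deceqE := inferInstance
  rk S := M.rk (S.map (Function.Embedding.subtype _) ∪ F) - M.rk F
  rk_empty := by simp
  rk_mono := fun S T h =>
    Nat.sub_le_sub_right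
      (M.rk_mono (Finset.union_subset_union_left (Finset.map_subset_map.mpr h))) _
  rk_submod := fun S T => by
    try dsimp only
    set e := Function.Embedding.subtype (fun x : M.E => x ∉ F) with he
    have h1 : (S ∪ T).map e ∪ F = (S.map e ∪ F) ∪ (T.map e ∪ F) := by
      rw [Finset.map_union, Finset.union_union_distrib_right]
    have h2 : (S ∩ T).map e ∪ F = (S.map e ∪ F) ∩ (T.map e ∪ F) := by
      rw [Finset.map_inter, Finset.inter_union_distrib_right]
    have h3 := M.rk_submod (S.map e ∪ F) (T.map e ∪ F)
    have h4 : M.rk F ≤ M.rk (S.map e ∪ F) := M.rk_mono Finset.subset_union_right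
    have h5 : M.rk F ≤ M.rk (T.map e ∪ F) := M.rk_mono Finset.subset_union_right
    have h6 : M.rk F ≤ M.rk ((S ∩ T).map e ∪ F) := M.rk_mono Finset.subset_union_right
    have h7 : M.rk F ≤ M.rk ((S ∪ T).map e ∪ F) := M.rk_mono Finset.subset_union_right
    rw [h1] at h7 ⊢
    rw [h2] at h6 ⊢
    omega
  rk_insert_le := fun S x => by
    try dsimp only
    set e := Function.Embedding.subtype (fun x : M.E => x ∉ F) with he
    have h1 : (insert x S).map e ∪ F = insert (e x) (S.map e ∪ F) := by
      rw [Finset.map_insert, Finset.insert_union]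
    have h2 := M.rk_insert_le (S.map e ∪ F) (e x)
    have h3 : M.rk F ≤ M.rk (S.map e ∪ F) := M.rk_mono Finset.subset_union_right
    rw [h1]
    omega

end FinMatroid

namespace FinMatroid

/-- `P` is a Kazhdan–Lusztig family: it assigns to each loopless matroid a polynomial
satisfying the three defining conditions of the Kazhdan–Lusztig polynomial.
Condition (2), `deg P_M < rk M / 2`, is expressed by the vanishing of all coefficients
in degrees `i` with `2 i ≥ rk M`; condition (3), the Laurent-polynomial identity
`t^(rk M) P_M(t⁻¹) = ∑_F χ_{M_F}(t) P_{M^F}(t)`, is expressed via evaluation at every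
nonzero rational number. -/
def IsKLFamily (P : FinMatroid → Polynomial ℤ) : Prop :=
  (∀ M : FinMatroid, M.Loopless → M.rank = 0 → P M = 1) ∧
  (∀ M : FinMatroid, M.Loopless → 0 < M.rank →
      ∀ i : ℕ, M.rank ≤ 2 * i → (P M).coeff i = 0) ∧
  (∀ M : FinMatroid, M.Loopless → ∀ q : ℚ, q ≠ 0 →
      q ^ M.rank * Polynomial.aeval q⁻¹ (P M) =
        ∑ F ∈ M.flats,
          Polynomial.aeval q ((M.localization F).charPoly) *
            Polynomial.aeval q (P (M.restrictionAt F)))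

end FinMatroid

namespace FinMatroid

/-- The direct sum of two matroids. -/
noncomputable def directSum (M N : FinMatroid) : FinMatroid where
  E := M.E ⊕ N.E
  fintypeE := inferInstance
  deceqE := inferInstance
  rk S := M.rk S.toLeft + N.rk S.toRight
  rk_empty := by
    try dsimp only
    have h1 : (∅ : Finset (M.E ⊕ N.E)).toLeft = ∅ := by ext a; simp
    have h2 : (∅ : Finset (M.E ⊕ N.E)).toRight = ∅ := by ext a; simp
    rw [h1, h2, M.rk_empty, N.rk_empty]
  rk_mono := fun S T h =>
    Nat.add_le_add (M.rk_mono (Finset.toLeft_subset_toLeft h))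
      (N.rk_mono (Finset.toRight_subset_toRight h))
  rk_submod := fun S T => by
    try dsimp only
    have hL1 : (S ∪ T).toLeft = S.toLeft ∪ T.toLeft := by ext a; simp
    have hL2 : (S ∩ T).toLeft = S.toLeft ∩ T.toLeft := by ext a; simp
    have hR1 : (S ∪ T).toRight = S.toRight ∪ T.toRight := by ext a; simp
    have hR2 : (S ∩ T).toRight = S.toRight ∩ T.toRight := by ext a; simp
    rw [hL1, hL2, hR1, hR2]
    have := M.rk_submod S.toLeft T.toLeft
    have := N.rk_submod S.toRight T.toRight
    omega
  rk_insert_le := fun S x => by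
    try dsimp only
    cases x with
    | inl a =>
        have hL : (insert (Sum.inl a) S).toLeft = insert a S.toLeft := by ext b; simp
        have hR : (insert (Sum.inl a) S).toRight = S.toRight := by ext b; simp
        rw [hL, hR]
        have := M.rk_insert_le S.toLeft a
        omega
    | inr b =>
        have hL : (insert (Sum.inr b) S).toLeft = S.toLeft := by ext c; simp
        have hR : (insert (Sum.inr b) S).toRight = insert b S.toRight := by ext c; simp
        rw [hL, hR]
        have := N.rk_insert_le S.toRight b
        omega

end FinMatroid

attribute [reducible] FinMatroid.directSum FinMatroid.localization FinMatroid.restrictionAt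

namespace FinMatroid

/-- A rank-preserving isomorphism of matroids. -/
structure Iso (M N : FinMatroid) where
  e : M.E ≃ N.E
  rk_eq : ∀ S : Finset M.E, N.rk (S.image e) = M.rk S

namespace Iso

variable {M N : FinMatroid}

lemma img_symm_img (i : Iso M N) (S : Finset M.E) : (S.image i.e).image i.e.symm = S := by
  ext x; simp [Finset.mem_image]

lemma img_img_symm (i : Iso M N) (S : Finset N.E) : (S.image i.e.symm).image i.e = S := by
  ext x
  simp only [Finset.mem_image]
  constructor
  · rintro ⟨a, ⟨b, hb, rfl⟩, rfl⟩; simpa using hb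
  · intro hx; exact ⟨i.e.symm x, ⟨x, hx, rfl⟩, by simp⟩

noncomputable def symm (i : Iso M N) : Iso N M where
  e := i.e.symm
  rk_eq := fun S => by
    have h := i.rk_eq (S.image i.e.symm)
    rw [i.img_img_symm] at h
    exact h.symm

lemma image_univ (i : Iso M N) : (Finset.univ : Finset M.E).image i.e = Finset.univ := by
  ext x
  simp only [Finset.mem_univ, iff_true, Finset.mem_image]
  exact ⟨i.e.symm x, by simp⟩

lemma rank_eq (i : Iso M N) : N.rank = M.rank := by
  have := i.rk_eq Finset.univ
  rwa [i.image_univ] at this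

lemma image_subset_iff' (i : Iso M N) {S T : Finset M.E} :
    S.image i.e ⊆ T.image i.e ↔ S ⊆ T :=
  Finset.image_subset_image_iff i.e.injective

lemma image_ssubset_iff' (i : Iso M N) {S T : Finset M.E} :
    S.image i.e ⊂ T.image i.e ↔ S ⊂ T := by
  rw [Finset.ssubset_def, Finset.ssubset_def, i.image_subset_iff', i.image_subset_iff']

lemma image_inj (i : Iso M N) {S T : Finset M.E} (h : S.image i.e = T.image i.e) : S = T :=
  Finset.image_injective i.e.injective h

theorem isFlat_image (i : Iso M N) {F : Finset M.E} (hF : M.IsFlat F) :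
    N.IsFlat (F.image i.e) := by
  intro y hy
  obtain ⟨x, rfl⟩ := i.e.surjective y
  have hx : x ∉ F := fun h => hy (Finset.mem_image_of_mem _ h)
  have h2 := hF x hx
  rw [← Finset.image_insert, i.rk_eq, i.rk_eq]
  exact h2

lemma mem_flats {M : FinMatroid} {F : Finset M.E} : F ∈ M.flats ↔ M.IsFlat F := by
  simp [flats]

lemma flats_eq (i : Iso M N) : N.flats = M.flats.image (fun F => F.image i.e) := by
  ext G
  simp only [mem_flats, Finset.mem_image]
  constructor
  · intro hG
    exact ⟨G.image i.e.symm, i.symm.isFlat_image hG, i.img_img_symm G⟩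
  · rintro ⟨F, hF, rfl⟩
    exact i.isFlat_image hF

theorem mu_eq (i : Iso M N) : ∀ (B A : Finset M.E),
    N.mu (A.image i.e) (B.image i.e) = M.mu A B := by
  intro B
  induction B using Finset.strongInduction with
  | _ B ih =>
    intro A
    rw [mu, mu]
    by_cases hAB : A = B
    · simp [hAB]
    · have h2 : A.image i.e ≠ B.image i.e := fun h => hAB (i.image_inj h)
      rw [if_neg hAB, if_neg h2]
      rw [Finset.sum_attach _ (fun G => N.mu (A.image i.e) G),
        Finset.sum_attach _ (fun G => M.mu A G)]
      congr 1
      have hset : N.flats.filter (fun G => A.image i.e ⊆ G ∧ G ⊂ B.image i.e)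
          = (M.flats.filter (fun G => A ⊆ G ∧ G ⊂ B)).image (fun F => F.image i.e) := by
        ext G'
        simp only [Finset.mem_filter, Finset.mem_image, mem_flats]
        constructor
        · rintro ⟨hf, hA, hB⟩
          refine ⟨G'.image i.e.symm, ⟨i.symm.isFlat_image hf, ?_, ?_⟩, i.img_img_symm G'⟩
          · rw [← i.image_subset_iff', i.img_img_symm]; exact hA
          · rw [← i.image_ssubset_iff', i.img_img_symm]; exact hB
        · rintro ⟨G, ⟨hf, hA, hB⟩, rfl⟩
          exact ⟨i.isFlat_image hf, i.image_subset_iff'.mpr hA, i.image_ssubset_iff'.mpr hB⟩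
      rw [hset, Finset.sum_image (fun x _ y _ h => i.image_inj h)]
      refine Finset.sum_congr rfl (fun G hG => ?_)
      exact ih G (Finset.mem_filter.mp hG).2.2 A

lemma loopless (i : Iso M N) (h : M.Loopless) : N.Loopless := by
  intro y
  obtain ⟨x, rfl⟩ := i.e.surjective y
  rw [← Finset.image_singleton, i.rk_eq]
  exact h x

lemma charPoly_eq (i : Iso M N) : N.charPoly = M.charPoly := by
  unfold charPoly
  rw [i.flats_eq, Finset.sum_image (fun x _ y _ h => i.image_inj h)]
  refine Finset.sum_congr rfl (fun F _ => ?_)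
  have h1 : N.mu ∅ (F.image i.e) = M.mu ∅ F := by
    have := i.mu_eq F ∅
    rwa [Finset.image_empty] at this
  rw [h1, i.rank_eq, i.rk_eq]

end Iso

end FinMatroid

namespace FinMatroid

variable {M N : FinMatroid}

namespace Iso

lemma mem_image_iff (i : Iso M N) {F : Finset M.E} (x : M.E) :
    x ∈ F ↔ i.e x ∈ F.image i.e := by
  simp [Finset.mem_image, i.e.injective.eq_iff]

noncomputable def localizationIso (i : Iso M N) (F : Finset M.E) :
    Iso (M.localization F) (N.localization (F.image i.e)) where
  e := i.e.subtypeEquiv (fun x => i.mem_image_iff x)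
  rk_eq := fun S => by
    have key : (S.image (i.e.subtypeEquiv (fun x => i.mem_image_iff x))).map
          (Function.Embedding.subtype (fun y : N.E => y ∈ F.image i.e))
        = ((S.map (Function.Embedding.subtype (fun x : M.E => x ∈ F))).image i.e) := by
      ext y
      simp only [Finset.mem_map, Finset.mem_image, Function.Embedding.coe_subtype,
        Equiv.subtypeEquiv_apply]
      constructor
      · rintro ⟨b, ⟨a, ha, rfl⟩, rfl⟩
        exact ⟨a.1, ⟨a, ha, rfl⟩, rfl⟩
      · rintro ⟨x, ⟨a, ha, rfl⟩, rfl⟩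
        exact ⟨_, ⟨a, ha, rfl⟩, rfl⟩
    exact (congrArg N.rk key).trans (i.rk_eq _)

noncomputable def restrictionAtIso (i : Iso M N) (F : Finset M.E) :
    Iso (M.restrictionAt F) (N.restrictionAt (F.image i.e)) where
  e := i.e.subtypeEquiv (q := fun y => y ∉ F.image i.e)
    (fun x => not_iff_not.mpr (i.mem_image_iff x))
  rk_eq := fun S => by
    have key : (S.image (i.e.subtypeEquiv (q := fun y => y ∉ F.image i.e)
          (fun x => not_iff_not.mpr (i.mem_image_iff x)))).map
          (Function.Embedding.subtype (fun y : N.E => y ∉ F.image i.e))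
        = ((S.map (Function.Embedding.subtype (fun x : M.E => x ∉ F))).image i.e) := by
      ext y
      simp only [Finset.mem_map, Finset.mem_image, Function.Embedding.coe_subtype,
        Equiv.subtypeEquiv_apply]
      constructor
      · rintro ⟨b, ⟨a, ha, rfl⟩, rfl⟩
        exact ⟨a.1, ⟨a, ha, rfl⟩, rfl⟩
      · rintro ⟨x, ⟨a, ha, rfl⟩, rfl⟩
        exact ⟨_, ⟨a, ha, rfl⟩, rfl⟩
    have h2 := congrArg (fun T => N.rk (T ∪ F.image i.e)) key
    rw [← Finset.image_union, i.rk_eq] at h2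
    exact congrArg₂ (· - ·) h2 (i.rk_eq F)

end Iso

/-- The restriction at the empty flat is isomorphic to the original matroid. -/
noncomputable def restrictEmptyIso (M : FinMatroid) : Iso (M.restrictionAt ∅) M where
  e := Equiv.subtypeUnivEquiv (by simp)
  rk_eq := fun S => by
    have key : S.image (Equiv.subtypeUnivEquiv
          (p := fun x : M.E => x ∉ (∅ : Finset M.E)) (by simp))
        = S.map (Function.Embedding.subtype (fun x : M.E => x ∉ (∅ : Finset M.E))) := by
      ext y
      constructor
      · intro hy
        obtain ⟨a, ha, rfl⟩ := Finset.mem_image.mp hy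
        exact Finset.mem_map.mpr ⟨a, ha, rfl⟩
      · intro hy
        obtain ⟨a, ha, rfl⟩ := Finset.mem_map.mp hy
        exact Finset.mem_image.mpr ⟨a, ha, rfl⟩
    have h2 : M.rk (S.map (Function.Embedding.subtype
          (fun x : M.E => x ∉ (∅ : Finset M.E))) ∪ ∅) - M.rk ∅
        = M.rk (S.map (Function.Embedding.subtype
          (fun x : M.E => x ∉ (∅ : Finset M.E)))) := by
      rw [Finset.union_empty, M.rk_empty, Nat.sub_zero]
    exact (congrArg M.rk key).trans h2.symm

lemma loopless_localization (M : FinMatroid) (hM : M.Loopless) (F : Finset M.E) :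
    (M.localization F).Loopless := by
  intro x
  show M.rk _ = 1
  rw [Finset.map_singleton]
  exact hM x.1

lemma loopless_restrictionAt (M : FinMatroid) (hM : M.Loopless) {F : Finset M.E}
    (hF : M.IsFlat F) : (M.restrictionAt F).Loopless := by
  intro x
  show M.rk _ - M.rk F = 1
  rw [Finset.map_singleton, ← Finset.insert_eq]
  simp only [Function.Embedding.coe_subtype]
  have h1 := hF x.1 x.2
  have h2 := M.rk_insert_le F x.1
  have h3 : M.rk F ≤ M.rk (insert x.1 F) := M.rk_mono (Finset.subset_insert _ _)
  omega

lemma empty_mem_flats (M : FinMatroid) (hM : M.Loopless) : (∅ : Finset M.E) ∈ M.flats := by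
  rw [Iso.mem_flats]
  intro x _
  have h : insert x (∅ : Finset M.E) = {x} := by ext y; simp
  rw [h, hM x, M.rk_empty]
  omega

lemma rank_eq_zero_of_isEmpty (M : FinMatroid) (h : IsEmpty M.E) : M.rank = 0 := by
  have : (Finset.univ : Finset M.E) = ∅ := by simp
  rw [rank, this, M.rk_empty]

lemma isEmpty_of_rank_eq_zero (M : FinMatroid) (hM : M.Loopless) (h : M.rank = 0) :
    IsEmpty M.E := by
  by_contra hc
  rw [not_isEmpty_iff] at hc
  obtain ⟨x⟩ := hc
  have h1 := hM x
  have h2 : M.rk {x} ≤ M.rank := M.rk_mono (Finset.subset_univ _)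
  omega

lemma charPoly_of_isEmpty (M : FinMatroid) (h : IsEmpty M.E) : M.charPoly = 1 := by
  have hflats : M.flats = {∅} := by
    ext F
    rw [Iso.mem_flats]
    simp only [Finset.mem_singleton]
    constructor
    · intro _; exact Finset.eq_empty_of_isEmpty F
    · rintro rfl x; exact (h.false x).elim
  have hmu : M.mu (∅ : Finset M.E) ∅ = 1 := by rw [mu]; simp
  rw [charPoly, hflats, Finset.sum_singleton, hmu, M.rk_empty,
    rank_eq_zero_of_isEmpty M h]
  simp

lemma localization_empty_isEmpty (M : FinMatroid) :
    IsEmpty (M.localization (∅ : Finset M.E)).E :=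
  ⟨fun x => absurd x.2 (Finset.notMem_empty _)⟩

lemma charPoly_localization_empty (M : FinMatroid) :
    (M.localization (∅ : Finset M.E)).charPoly = 1 :=
  charPoly_of_isEmpty _ (localization_empty_isEmpty M)

end FinMatroid

namespace FinMatroid

variable {M N : FinMatroid}

lemma directSum_rk (M N : FinMatroid) (S : Finset (M.E ⊕ N.E)) :
    (M.directSum N).rk S = M.rk S.toLeft + N.rk S.toRight := rfl

lemma toLeft_insert_inl (a : M.E) (S : Finset (M.E ⊕ N.E)) :
    (insert (Sum.inl a) S).toLeft = insert a S.toLeft := by ext; simp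
lemma toRight_insert_inl (a : M.E) (S : Finset (M.E ⊕ N.E)) :
    (insert (Sum.inl a) S).toRight = S.toRight := by ext; simp
lemma toLeft_insert_inr (b : N.E) (S : Finset (M.E ⊕ N.E)) :
    (insert (Sum.inr b) S).toLeft = S.toLeft := by ext; simp
lemma toRight_insert_inr (b : N.E) (S : Finset (M.E ⊕ N.E)) :
    (insert (Sum.inr b) S).toRight = insert b S.toRight := by ext; simp

lemma loopless_directSum (hM : M.Loopless) (hN : N.Loopless) : (M.directSum N).Loopless := by
  intro x
  cases x with
  | inl a =>
      rw [directSum_rk]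
      have h1 : ({Sum.inl a} : Finset (M.E ⊕ N.E)).toLeft = {a} := by ext; simp
      have h2 : ({Sum.inl a} : Finset (M.E ⊕ N.E)).toRight = ∅ := by ext; simp
      rw [h1, h2, hM a, N.rk_empty]
  | inr b =>
      rw [directSum_rk]
      have h1 : ({Sum.inr b} : Finset (M.E ⊕ N.E)).toLeft = ∅ := by ext; simp
      have h2 : ({Sum.inr b} : Finset (M.E ⊕ N.E)).toRight = {b} := by ext; simp
      rw [h1, h2, hN b, M.rk_empty]

lemma rank_directSum (M N : FinMatroid) : (M.directSum N).rank = M.rank + N.rank := by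
  rw [rank, directSum_rk]
  have h1 : (Finset.univ : Finset (M.E ⊕ N.E)).toLeft = Finset.univ := by ext; simp
  have h2 : (Finset.univ : Finset (M.E ⊕ N.E)).toRight = Finset.univ := by ext; simp
  rw [h1, h2]; rfl

lemma isFlat_directSum (F : Finset (M.E ⊕ N.E)) :
    (M.directSum N).IsFlat F ↔ M.IsFlat F.toLeft ∧ N.IsFlat F.toRight := by
  constructor
  · intro h
    constructor
    · intro a ha heq
      refine h (Sum.inl a) (by simpa using ha) ?_
      rw [directSum_rk, directSum_rk, toLeft_insert_inl, toRight_insert_inl, heq]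
    · intro b hb heq
      refine h (Sum.inr b) (by simpa using hb) ?_
      rw [directSum_rk, directSum_rk, toLeft_insert_inr, toRight_insert_inr, heq]
  · rintro ⟨h1, h2⟩ x hx
    cases x with
    | inl a =>
        rw [directSum_rk, directSum_rk, toLeft_insert_inl, toRight_insert_inl]
        have := h1 a (by simpa using hx)
        have hm : M.rk F.toLeft ≤ M.rk (insert a F.toLeft) := M.rk_mono (Finset.subset_insert _ _)
        omega
    | inr b =>
        rw [directSum_rk, directSum_rk, toLeft_insert_inr, toRight_insert_inr]
        have := h2 b (by simpa using hx)
        have hm : N.rk F.toRight ≤ N.rk (insert b F.toRight) := N.rk_mono (Finset.subset_insert _ _)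
        omega

lemma disjSum_inj2 (p q : Finset M.E × Finset N.E)
    (h : p.1.disjSum p.2 = q.1.disjSum q.2) : p = q := by
  have h1 : p.1 = q.1 := by
    rw [← Finset.toLeft_disjSum (s := p.1) (t := p.2), h, Finset.toLeft_disjSum]
  have h2 : p.2 = q.2 := by
    rw [← Finset.toRight_disjSum (s := p.1) (t := p.2), h, Finset.toRight_disjSum]
  exact Prod.ext h1 h2

lemma flats_directSum (M N : FinMatroid) : (M.directSum N).flats
    = (M.flats ×ˢ N.flats).image (fun p => p.1.disjSum p.2) := by
  ext F
  simp only [Iso.mem_flats, Finset.mem_image, Finset.mem_product]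
  constructor
  · intro h
    obtain ⟨h1, h2⟩ := (isFlat_directSum F).mp (Iso.mem_flats.mp h)
    exact ⟨(F.toLeft, F.toRight), ⟨h1, h2⟩, Finset.toLeft_disjSum_toRight⟩
  · rintro ⟨⟨F₁, F₂⟩, ⟨hf1, hf2⟩, rfl⟩
    rw [Iso.mem_flats, isFlat_directSum]
    simp only [Finset.toLeft_disjSum, Finset.toRight_disjSum]
    exact ⟨hf1, hf2⟩

lemma subset_iff_toLR {G F : Finset (M.E ⊕ N.E)} :
    G ⊆ F ↔ G.toLeft ⊆ F.toLeft ∧ G.toRight ⊆ F.toRight := by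
  constructor
  · intro h
    exact ⟨Finset.toLeft_subset_toLeft h, Finset.toRight_subset_toRight h⟩
  · rintro ⟨h1, h2⟩ x hx
    cases x with
    | inl a => exact Finset.mem_toLeft.mp (h1 (Finset.mem_toLeft.mpr hx))
    | inr b => exact Finset.mem_toRight.mp (h2 (Finset.mem_toRight.mpr hx))

lemma filter_subset_eq_insert {α : Type} [DecidableEq α] (s : Finset (Finset α)) (B : Finset α) (hB : B ∈ s) :
    s.filter (fun G => G ⊆ B) = insert B (s.filter (fun G => G ⊂ B)) := by
  ext G
  simp only [Finset.mem_filter, Finset.mem_insert]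
  constructor
  · rintro ⟨hs, hsub⟩
    rcases eq_or_ne G B with rfl | hne
    · exact Or.inl rfl
    · exact Or.inr ⟨hs, lt_of_le_of_ne hsub hne⟩
  · rintro (rfl | ⟨hs, hss⟩)
    · exact ⟨hB, subset_rfl⟩
    · exact ⟨hs, hss.subset⟩

lemma not_mem_filter_ssubset {α : Type} [DecidableEq α] (s : Finset (Finset α)) (B : Finset α) :
    B ∉ s.filter (fun G => G ⊂ B) := by
  simp [Finset.mem_filter]

lemma mu_empty_empty (M : FinMatroid) : M.mu (∅ : Finset M.E) ∅ = 1 := by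
  rw [mu]; simp

lemma sum_mu_eq (M : FinMatroid) (hM : M.Loopless) {B : Finset M.E} (hB : B ∈ M.flats) :
    ∑ G ∈ M.flats.filter (fun G => G ⊆ B), M.mu ∅ G = if B = ∅ then 1 else 0 := by
  by_cases hBe : B = ∅
  · subst hBe
    have hfil : M.flats.filter (fun G => G ⊆ (∅ : Finset M.E)) = {∅} := by
      ext G
      simp only [Finset.mem_filter, Finset.subset_empty, Finset.mem_singleton]
      constructor
      · rintro ⟨_, rfl⟩; rfl
      · rintro rfl; exact ⟨empty_mem_flats M hM, rfl⟩
    rw [hfil, Finset.sum_singleton, if_pos rfl, mu_empty_empty]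
  · rw [if_neg hBe, filter_subset_eq_insert _ _ hB,
      Finset.sum_insert (not_mem_filter_ssubset _ _)]
    have hmu : M.mu ∅ B = -∑ G ∈ M.flats.filter (fun G => G ⊂ B), M.mu ∅ G := by
      rw [mu, if_neg (fun h => hBe h.symm), Finset.sum_attach]
      congr 1
      refine Finset.sum_congr ?_ (fun _ _ => rfl)
      ext G
      simp only [Finset.mem_filter]
      exact ⟨fun ⟨h1, _, h3⟩ => ⟨h1, h3⟩, fun ⟨h1, h3⟩ => ⟨h1, Finset.empty_subset _, h3⟩⟩
    rw [hmu, neg_add_cancel]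

lemma mu_directSum (hM : M.Loopless) (hN : N.Loopless) :
    ∀ F : Finset (M.E ⊕ N.E), (M.directSum N).IsFlat F →
      (M.directSum N).mu ∅ F = M.mu ∅ F.toLeft * N.mu ∅ F.toRight := by
  intro F
  induction F using Finset.strongInduction with
  | _ F ih =>
    intro hF
    by_cases hFe : F = ∅
    · subst hFe
      have h1 : (∅ : Finset (M.E ⊕ N.E)).toLeft = ∅ := by ext; simp
      have h2 : (∅ : Finset (M.E ⊕ N.E)).toRight = ∅ := by ext; simp
      rw [mu_empty_empty, h1, h2, mu_empty_empty, mu_empty_empty]; ring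
    · have hFf : F ∈ (M.directSum N).flats := Iso.mem_flats.mpr hF
      have hstep : (M.directSum N).mu ∅ F
          = -∑ G ∈ (M.directSum N).flats.filter (fun G => G ⊂ F),
              M.mu ∅ G.toLeft * N.mu ∅ G.toRight := by
        rw [mu, if_neg (fun h => hFe h.symm), Finset.sum_attach]
        congr 1
        refine Finset.sum_congr ?_ ?_
        · ext G
          simp only [Finset.mem_filter]
          exact ⟨fun ⟨h1, _, h3⟩ => ⟨h1, h3⟩, fun ⟨h1, h3⟩ => ⟨h1, Finset.empty_subset _, h3⟩⟩
        · intro G hG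
          obtain ⟨hGf, hGss⟩ := Finset.mem_filter.mp hG
          exact ih G hGss (Iso.mem_flats.mp hGf)
      have hsub : ∑ G ∈ (M.directSum N).flats.filter (fun G => G ⊆ F),
          M.mu ∅ G.toLeft * N.mu ∅ G.toRight = 0 := by
        have heq : ∑ G ∈ (M.directSum N).flats.filter (fun G => G ⊆ F),
            M.mu ∅ G.toLeft * N.mu ∅ G.toRight
            = ∑ p ∈ (M.flats.filter (fun G => G ⊆ F.toLeft)) ×ˢ
                (N.flats.filter (fun G => G ⊆ F.toRight)),
                M.mu ∅ p.1 * N.mu ∅ p.2 := by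
          refine Finset.sum_nbij' (fun G => (G.toLeft, G.toRight))
            (fun p => p.1.disjSum p.2) ?_ ?_ ?_ ?_ ?_
          · intro G hG
            obtain ⟨hGf, hGs⟩ := Finset.mem_filter.mp hG
            obtain ⟨h1, h2⟩ := (isFlat_directSum G).mp (Iso.mem_flats.mp hGf)
            rw [subset_iff_toLR] at hGs
            simp only [Finset.mem_product, Finset.mem_filter]
            exact ⟨⟨Iso.mem_flats.mpr h1, hGs.1⟩, ⟨Iso.mem_flats.mpr h2, hGs.2⟩⟩
          · intro p hp
            simp only [Finset.mem_product, Finset.mem_filter] at hp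
            rw [Finset.mem_filter]
            constructor
            · rw [Iso.mem_flats, isFlat_directSum]
              simp only [Finset.toLeft_disjSum, Finset.toRight_disjSum]
              exact ⟨Iso.mem_flats.mp hp.1.1, Iso.mem_flats.mp hp.2.1⟩
            · rw [subset_iff_toLR]
              simp only [Finset.toLeft_disjSum, Finset.toRight_disjSum]
              exact ⟨hp.1.2, hp.2.2⟩
          · intro G _; exact Finset.toLeft_disjSum_toRight
          · intro p _; simp [Finset.toLeft_disjSum, Finset.toRight_disjSum]
          · intro G _; rfl
        rw [heq, Finset.sum_product]
        dsimp only
        rw [← Finset.sum_mul_sum]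
        have e1 := sum_mu_eq M hM (Iso.mem_flats.mpr ((isFlat_directSum F).mp hF).1)
        have e2 := sum_mu_eq N hN (Iso.mem_flats.mpr ((isFlat_directSum F).mp hF).2)
        rw [e1, e2]
        have hne : ¬(F.toLeft = ∅ ∧ F.toRight = ∅) := by
          rintro ⟨hc1, hc2⟩
          apply hFe
          rw [← Finset.toLeft_disjSum_toRight (u := F), hc1, hc2]
          simp
        rcases Classical.em (F.toLeft = ∅) with h1 | h1
        · rw [if_pos h1, if_neg (fun h2 => hne ⟨h1, h2⟩)]; ring
        · rw [if_neg h1]; ring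
      have hins : (M.directSum N).flats.filter (fun G => G ⊆ F)
          = insert F ((M.directSum N).flats.filter (fun G => G ⊂ F)) := by
        ext G
        simp only [Finset.mem_filter, Finset.mem_insert]
        constructor
        · rintro ⟨hs, hsubG⟩
          rcases eq_or_ne G F with rfl | hne
          · exact Or.inl rfl
          · exact Or.inr ⟨hs, lt_of_le_of_ne hsubG hne⟩
        · rintro (rfl | ⟨hs, hss⟩)
          · exact ⟨hFf, subset_rfl⟩
          · exact ⟨hs, hss.subset⟩
      rw [hins, Finset.sum_insert (by
        simp only [Finset.mem_filter]
        rintro ⟨-, hc⟩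
        exact absurd hc (lt_irrefl F))] at hsub
      rw [hstep]
      linarith [hsub]

lemma rk_le_rank (M : FinMatroid) (S : Finset M.E) : M.rk S ≤ M.rank :=
  M.rk_mono (Finset.subset_univ _)

lemma charPoly_directSum (hM : M.Loopless) (hN : N.Loopless) :
    (M.directSum N).charPoly = M.charPoly * N.charPoly := by
  unfold charPoly
  rw [Finset.sum_mul_sum]
  have h1 : ∑ F ∈ (M.directSum N).flats,
      Polynomial.C ((M.directSum N).mu ∅ F) *
        Polynomial.X ^ ((M.directSum N).rank - (M.directSum N).rk F)
      = ∑ p ∈ M.flats ×ˢ N.flats,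
          (Polynomial.C (M.mu ∅ p.1) * Polynomial.X ^ (M.rank - M.rk p.1)) *
          (Polynomial.C (N.mu ∅ p.2) * Polynomial.X ^ (N.rank - N.rk p.2)) := by
    refine Finset.sum_nbij' (fun F => (F.toLeft, F.toRight))
      (fun p => p.1.disjSum p.2) ?_ ?_ ?_ ?_ ?_
    · intro F hF
      obtain ⟨h1, h2⟩ := (isFlat_directSum F).mp (Iso.mem_flats.mp hF)
      exact Finset.mem_product.mpr ⟨Iso.mem_flats.mpr h1, Iso.mem_flats.mpr h2⟩
    · intro p hp
      obtain ⟨hp1, hp2⟩ := Finset.mem_product.mp hp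
      rw [Iso.mem_flats, isFlat_directSum]
      simp only [Finset.toLeft_disjSum, Finset.toRight_disjSum]
      exact ⟨Iso.mem_flats.mp hp1, Iso.mem_flats.mp hp2⟩
    · intro F _; exact Finset.toLeft_disjSum_toRight
    · intro p _; simp [Finset.toLeft_disjSum, Finset.toRight_disjSum]
    · intro F hF
      rw [mu_directSum hM hN F (Iso.mem_flats.mp hF), directSum_rk, rank_directSum]
      have hr1 := rk_le_rank M F.toLeft
      have hr2 := rk_le_rank N F.toRight
      have hexp : M.rank + N.rank - (M.rk F.toLeft + N.rk F.toRight)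
          = (M.rank - M.rk F.toLeft) + (N.rank - N.rk F.toRight) := by omega
      rw [hexp, Polynomial.C_mul, pow_add]
      ring
  refine h1.trans ?_
  rw [Finset.sum_product]

end FinMatroid

namespace FinMatroid

variable {M N : FinMatroid}

/-- A subtype of a sum as a sum of subtypes. -/
noncomputable def sumSubEquiv (psum : M.E ⊕ N.E → Prop) (p₁ : M.E → Prop) (p₂ : N.E → Prop)
    (hl : ∀ a, psum (Sum.inl a) ↔ p₁ a) (hr : ∀ b, psum (Sum.inr b) ↔ p₂ b) :
    {x : M.E ⊕ N.E // psum x} ≃ ({a // p₁ a} ⊕ {b // p₂ b}) :=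
  Equiv.subtypeSum.trans (Equiv.sumCongr (Equiv.subtypeEquivRight hl)
    (Equiv.subtypeEquivRight hr))

lemma sumSubEquiv_inl {psum : M.E ⊕ N.E → Prop} {p₁ : M.E → Prop} {p₂ : N.E → Prop}
    {hl : ∀ a, psum (Sum.inl a) ↔ p₁ a} {hr : ∀ b, psum (Sum.inr b) ↔ p₂ b}
    (x : M.E) (h : psum (Sum.inl x)) :
    sumSubEquiv psum p₁ p₂ hl hr ⟨Sum.inl x, h⟩ = Sum.inl ⟨x, (hl x).mp h⟩ := rfl

lemma sumSubEquiv_inr {psum : M.E ⊕ N.E → Prop} {p₁ : M.E → Prop} {p₂ : N.E → Prop}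
    {hl : ∀ a, psum (Sum.inl a) ↔ p₁ a} {hr : ∀ b, psum (Sum.inr b) ↔ p₂ b}
    (y : N.E) (h : psum (Sum.inr y)) :
    sumSubEquiv psum p₁ p₂ hl hr ⟨Sum.inr y, h⟩ = Sum.inr ⟨y, (hr y).mp h⟩ := rfl

lemma sumSubEquiv_image_toLeft {psum : M.E ⊕ N.E → Prop} {p₁ : M.E → Prop} {p₂ : N.E → Prop}
    (hl : ∀ a, psum (Sum.inl a) ↔ p₁ a) (hr : ∀ b, psum (Sum.inr b) ↔ p₂ b)
    (S : Finset {x : M.E ⊕ N.E // psum x}) :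
    ((S.image (sumSubEquiv psum p₁ p₂ hl hr)).toLeft).map (Function.Embedding.subtype p₁)
      = (S.map (Function.Embedding.subtype psum)).toLeft := by
  ext a
  simp only [Finset.mem_map, Finset.mem_toLeft, Finset.mem_image,
    Function.Embedding.coe_subtype]
  constructor
  · rintro ⟨s', ⟨u, hu, hequ⟩, rfl⟩
    obtain ⟨x | y, hx⟩ := u
    · rw [sumSubEquiv_inl] at hequ
      obtain rfl := Sum.inl.inj hequ
      exact ⟨⟨Sum.inl x, hx⟩, hu, rfl⟩
    · rw [sumSubEquiv_inr] at hequ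
      simp at hequ
  · rintro ⟨u, hu, hequ⟩
    obtain ⟨x | y, hx⟩ := u
    · obtain rfl : x = a := Sum.inl.inj hequ
      exact ⟨⟨x, (hl x).mp hx⟩, ⟨⟨Sum.inl x, hx⟩, hu, rfl⟩, rfl⟩
    · simp at hequ

lemma sumSubEquiv_image_toRight {psum : M.E ⊕ N.E → Prop} {p₁ : M.E → Prop} {p₂ : N.E → Prop}
    (hl : ∀ a, psum (Sum.inl a) ↔ p₁ a) (hr : ∀ b, psum (Sum.inr b) ↔ p₂ b)
    (S : Finset {x : M.E ⊕ N.E // psum x}) :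
    ((S.image (sumSubEquiv psum p₁ p₂ hl hr)).toRight).map (Function.Embedding.subtype p₂)
      = (S.map (Function.Embedding.subtype psum)).toRight := by
  ext b
  simp only [Finset.mem_map, Finset.mem_toRight, Finset.mem_image,
    Function.Embedding.coe_subtype]
  constructor
  · rintro ⟨s', ⟨u, hu, hequ⟩, rfl⟩
    obtain ⟨x | y, hx⟩ := u
    · rw [sumSubEquiv_inl] at hequ
      simp at hequ
    · rw [sumSubEquiv_inr] at hequ
      obtain rfl := Sum.inr.inj hequ
      exact ⟨⟨Sum.inr y, hx⟩, hu, rfl⟩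
  · rintro ⟨u, hu, hequ⟩
    obtain ⟨x | y, hx⟩ := u
    · simp at hequ
    · obtain rfl : y = b := Sum.inr.inj hequ
      exact ⟨⟨y, (hr y).mp hx⟩, ⟨⟨Sum.inr y, hx⟩, hu, rfl⟩, rfl⟩

noncomputable def locSumEquiv (F₁ : Finset M.E) (F₂ : Finset N.E) :
    {x : M.E ⊕ N.E // x ∈ F₁.disjSum F₂} ≃ ({a : M.E // a ∈ F₁} ⊕ {b : N.E // b ∈ F₂}) :=
  sumSubEquiv _ _ _ (fun a => Finset.inl_mem_disjSum) (fun b => Finset.inr_mem_disjSum)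

noncomputable def restrSumEquiv (F₁ : Finset M.E) (F₂ : Finset N.E) :
    {x : M.E ⊕ N.E // x ∉ F₁.disjSum F₂} ≃ ({a : M.E // a ∉ F₁} ⊕ {b : N.E // b ∉ F₂}) :=
  sumSubEquiv _ _ _ (fun a => not_iff_not.mpr Finset.inl_mem_disjSum)
    (fun b => not_iff_not.mpr Finset.inr_mem_disjSum)

noncomputable def locDirectSumIso (F₁ : Finset M.E) (F₂ : Finset N.E) :
    Iso ((M.directSum N).localization (F₁.disjSum F₂))
      ((M.localization F₁).directSum (N.localization F₂)) where
  e := locSumEquiv F₁ F₂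
  rk_eq := fun S => by
    have k₁ := sumSubEquiv_image_toLeft (fun a : M.E => Finset.inl_mem_disjSum)
      (fun b : N.E => Finset.inr_mem_disjSum) S
    have k₂ := sumSubEquiv_image_toRight (fun a : M.E => Finset.inl_mem_disjSum)
      (fun b : N.E => Finset.inr_mem_disjSum) S
    exact congrArg₂ (· + ·) (congrArg M.rk k₁) (congrArg N.rk k₂)

lemma nat_sub_helper {a₁ b₁ a₂ b₂ : ℕ} (h1 : b₁ ≤ a₁) (h2 : b₂ ≤ a₂) :
    (a₁ - b₁) + (a₂ - b₂) = a₁ + a₂ - (b₁ + b₂) := by omega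

noncomputable def restrDirectSumIso (F₁ : Finset M.E) (F₂ : Finset N.E) :
    Iso ((M.directSum N).restrictionAt (F₁.disjSum F₂))
      ((M.restrictionAt F₁).directSum (N.restrictionAt F₂)) where
  e := restrSumEquiv F₁ F₂
  rk_eq := fun S => by
    have k₁ := sumSubEquiv_image_toLeft
      (fun a : M.E => not_iff_not.mpr Finset.inl_mem_disjSum)
      (fun b : N.E => not_iff_not.mpr Finset.inr_mem_disjSum) S
    have k₂ := sumSubEquiv_image_toRight
      (fun a : M.E => not_iff_not.mpr Finset.inl_mem_disjSum)
      (fun b : N.E => not_iff_not.mpr Finset.inr_mem_disjSum) S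
    have k₁' : (Finset.image (⇑(restrSumEquiv F₁ F₂)) S).toLeft.map
          (Function.Embedding.subtype (fun a : M.E => a ∉ F₁))
        = (S.map (Function.Embedding.subtype
            (fun x : M.E ⊕ N.E => x ∉ F₁.disjSum F₂))).toLeft := k₁
    have k₂' : (Finset.image (⇑(restrSumEquiv F₁ F₂)) S).toRight.map
          (Function.Embedding.subtype (fun b : N.E => b ∉ F₂))
        = (S.map (Function.Embedding.subtype
            (fun x : M.E ⊕ N.E => x ∉ F₁.disjSum F₂))).toRight := k₂
    have m₁ : ((S.map (Function.Embedding.subtype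
          (fun x : M.E ⊕ N.E => x ∉ F₁.disjSum F₂))) ∪ F₁.disjSum F₂).toLeft
        = (S.map (Function.Embedding.subtype
          (fun x : M.E ⊕ N.E => x ∉ F₁.disjSum F₂))).toLeft ∪ F₁ := by
      ext c; simp
    have m₂ : ((S.map (Function.Embedding.subtype
          (fun x : M.E ⊕ N.E => x ∉ F₁.disjSum F₂))) ∪ F₁.disjSum F₂).toRight
        = (S.map (Function.Embedding.subtype
          (fun x : M.E ⊕ N.E => x ∉ F₁.disjSum F₂))).toRight ∪ F₂ := by
      ext c; simp
    have main : (M.rk (((S.image (restrSumEquiv F₁ F₂)).toLeft).map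
            (Function.Embedding.subtype (fun a : M.E => a ∉ F₁)) ∪ F₁) - M.rk F₁)
        + (N.rk (((S.image (restrSumEquiv F₁ F₂)).toRight).map
            (Function.Embedding.subtype (fun b : N.E => b ∉ F₂)) ∪ F₂) - N.rk F₂)
        = M.rk (((S.map (Function.Embedding.subtype
              (fun x : M.E ⊕ N.E => x ∉ F₁.disjSum F₂))) ∪ F₁.disjSum F₂).toLeft)
          + N.rk (((S.map (Function.Embedding.subtype
              (fun x : M.E ⊕ N.E => x ∉ F₁.disjSum F₂))) ∪ F₁.disjSum F₂).toRight)
          - (M.rk ((F₁.disjSum F₂).toLeft) + N.rk ((F₁.disjSum F₂).toRight)) := by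
      rw [m₁, m₂, Finset.toLeft_disjSum, Finset.toRight_disjSum]
      have hk₁ := congrArg (fun T => M.rk (T ∪ F₁)) k₁'
      have hk₂ := congrArg (fun T => N.rk (T ∪ F₂)) k₂'
      rw [hk₁, hk₂]
      exact nat_sub_helper (M.rk_mono Finset.subset_union_right)
        (N.rk_mono Finset.subset_union_right)
    exact main

noncomputable def emptySumIsoRight (h : IsEmpty M.E) : Iso (M.directSum N) N where
  e := @Equiv.emptySum M.E N.E h
  rk_eq := fun S => by
    have h1 : S.toLeft = ∅ := Finset.eq_empty_of_isEmpty _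
    have h2 : S.image (@Equiv.emptySum M.E N.E h) = S.toRight := by
      ext b
      simp only [Finset.mem_image, Finset.mem_toRight]
      constructor
      · rintro ⟨x | y, hx, rfl⟩
        · exact (h.false x).elim
        · exact hx
      · intro hb
        exact ⟨Sum.inr b, hb, rfl⟩
    rw [directSum_rk, h1, M.rk_empty, Nat.zero_add]
    exact congrArg N.rk h2

noncomputable def emptySumIsoLeft (h : IsEmpty N.E) : Iso (M.directSum N) M where
  e := @Equiv.sumEmpty M.E N.E h
  rk_eq := fun S => by
    have h1 : S.toRight = ∅ := Finset.eq_empty_of_isEmpty _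
    have h2 : S.image (@Equiv.sumEmpty M.E N.E h) = S.toLeft := by
      ext a
      simp only [Finset.mem_image, Finset.mem_toLeft]
      constructor
      · rintro ⟨x | y, hx, rfl⟩
        · exact hx
        · exact (h.false y).elim
      · intro ha
        exact ⟨Sum.inl a, ha, rfl⟩
    rw [directSum_rk, h1, N.rk_empty, Nat.add_zero]
    exact congrArg M.rk h2

end FinMatroid

namespace FinMatroid

lemma natDegree_P_le (P : FinMatroid → Polynomial ℤ) (hP : IsKLFamily P)
    (M : FinMatroid) (hM : M.Loopless) : (P M).natDegree ≤ M.rank := by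
  rcases Nat.eq_zero_or_pos M.rank with h0 | hpos
  · rw [hP.1 M hM h0, h0]
    simp
  · apply Polynomial.natDegree_le_iff_coeff_eq_zero.mpr
    intro i hi
    exact hP.2.1 M hM hpos i (by omega)

lemma eval_qmap (p : Polynomial ℤ) (q : ℚ) :
    (p.map (Int.castRingHom ℚ)).eval q = Polynomial.aeval q p := by
  rw [Polynomial.aeval_def, algebraMap_int_eq, Polynomial.eval_map]

lemma eval_reflect (p : Polynomial ℚ) (r : ℕ) (hp : p.natDegree ≤ r) (q : ℚ) (hq : q ≠ 0) :
    (Polynomial.reflect r p).eval q = q ^ r * p.eval q⁻¹ := by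
  have hqi : q⁻¹ ≠ 0 := inv_ne_zero hq
  letI := invertibleOfNonzero hqi
  have h := Polynomial.eval₂_reflect_mul_pow (RingHom.id ℚ) q⁻¹ r p hp
  rw [invOf_eq_inv, inv_inv] at h
  have h' : (Polynomial.reflect r p).eval q * q⁻¹ ^ r = p.eval q⁻¹ := h
  have hpow : (q⁻¹) ^ r * q ^ r = 1 := by
    rw [← mul_pow, inv_mul_cancel₀ hq, one_pow]
  calc (Polynomial.reflect r p).eval q
      = (Polynomial.reflect r p).eval q * ((q⁻¹) ^ r * q ^ r) := by rw [hpow, mul_one]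
    _ = ((Polynomial.reflect r p).eval q * (q⁻¹) ^ r) * q ^ r := by ring
    _ = p.eval q⁻¹ * q ^ r := by rw [h']
    _ = q ^ r * p.eval q⁻¹ := by ring

lemma sum_flats_eq_reflect (P : FinMatroid → Polynomial ℤ) (hP : IsKLFamily P)
    (M : FinMatroid) (hM : M.Loopless) :
    ∑ F ∈ M.flats, ((M.localization F).charPoly.map (Int.castRingHom ℚ))
        * ((P (M.restrictionAt F)).map (Int.castRingHom ℚ))
      = Polynomial.reflect M.rank ((P M).map (Int.castRingHom ℚ)) := by
  apply Polynomial.eq_of_infinite_eval_eq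
  have hsub : {x : ℚ | x ≠ 0} ⊆ {x : ℚ | Polynomial.eval x (∑ F ∈ M.flats,
      ((M.localization F).charPoly.map (Int.castRingHom ℚ))
        * ((P (M.restrictionAt F)).map (Int.castRingHom ℚ)))
      = Polynomial.eval x (Polynomial.reflect M.rank ((P M).map (Int.castRingHom ℚ)))} := by
    intro q hq
    simp only [Set.mem_setOf_eq]
    rw [Polynomial.eval_finset_sum,
      eval_reflect _ _ (le_trans Polynomial.natDegree_map_le (natDegree_P_le P hP M hM))
        q hq, eval_qmap, hP.2.2 M hM q hq]
    refine Finset.sum_congr rfl (fun F _ => ?_)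
    rw [Polynomial.eval_mul, eval_qmap, eval_qmap]
  refine Set.Infinite.mono hsub ?_
  have h2 := (Set.finite_singleton (0 : ℚ)).infinite_compl
  have hset : {x : ℚ | x ≠ 0} = ({0} : Set ℚ)ᶜ := by ext x; simp
  rw [hset]
  exact h2

lemma loopless_restr_empty (M : FinMatroid) (hM : M.Loopless) :
    (M.restrictionAt (∅ : Finset M.E)).Loopless :=
  Iso.loopless (restrictEmptyIso M).symm hM

lemma rank_restr_empty (M : FinMatroid) :
    (M.restrictionAt (∅ : Finset M.E)).rank = M.rank :=
  ((restrictEmptyIso M).rank_eq).symm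

lemma kl_coeff_eq (P : FinMatroid → Polynomial ℤ) (hP : IsKLFamily P)
    (M : FinMatroid) (hM : M.Loopless) (hr : 0 < M.rank) (j : ℕ) :
    ((P M).map (Int.castRingHom ℚ)).coeff j
      = if 2 * j ≤ M.rank
        then (∑ F ∈ M.flats.erase ∅,
            ((M.localization F).charPoly.map (Int.castRingHom ℚ))
              * ((P (M.restrictionAt F)).map (Int.castRingHom ℚ))).coeff (M.rank - j)
        else 0 := by
  by_cases hj : 2 * j ≤ M.rank
  · rw [if_pos hj]
    have hA := sum_flats_eq_reflect P hP M hM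
    rw [← Finset.add_sum_erase _ _ (empty_mem_flats M hM)] at hA
    have hterm : ((M.localization (∅ : Finset M.E)).charPoly.map (Int.castRingHom ℚ)) = 1 := by
      rw [charPoly_localization_empty]
      exact Polynomial.map_one _
    rw [hterm, one_mul] at hA
    have hcoeff := congrArg (fun p => Polynomial.coeff p (M.rank - j)) hA
    simp only [Polynomial.coeff_add, Polynomial.coeff_reflect] at hcoeff
    rw [Polynomial.revAt_le (by omega : M.rank - j ≤ M.rank)] at hcoeff
    have hjj : M.rank - (M.rank - j) = j := by omega
    rw [hjj] at hcoeff
    have hzero : ((P (M.restrictionAt (∅ : Finset M.E))).map (Int.castRingHom ℚ)).coeff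
        (M.rank - j) = 0 := by
      rw [Polynomial.coeff_map]
      have h0 := hP.2.1 (M.restrictionAt (∅ : Finset M.E)) (loopless_restr_empty M hM)
        (by rw [rank_restr_empty]; exact hr) (M.rank - j)
        (by rw [rank_restr_empty]; omega)
      rw [h0]
      simp
    rw [hzero, zero_add] at hcoeff
    exact hcoeff.symm
  · rw [if_neg hj, Polynomial.coeff_map, hP.2.1 M hM hr j (by omega)]
    simp

lemma kl_iso_aux (P : FinMatroid → Polynomial ℤ) (hP : IsKLFamily P) :
    ∀ n : ℕ, ∀ M N : FinMatroid, Fintype.card M.E ≤ n → ∀ i : Iso M N,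
      M.Loopless → P M = P N := by
  intro n
  induction n with
  | zero =>
      intro M N hcard i hM
      have hE : IsEmpty M.E := Fintype.card_eq_zero_iff.mp (le_antisymm hcard (Nat.zero_le _))
      have h0 : M.rank = 0 := rank_eq_zero_of_isEmpty M hE
      rw [hP.1 M hM h0, hP.1 N (i.loopless hM) (by rw [i.rank_eq]; exact h0)]
  | succ n ih =>
      intro M N hcard i hM
      have hN : N.Loopless := i.loopless hM
      rcases Nat.eq_zero_or_pos M.rank with h0 | hr
      · rw [hP.1 M hM h0, hP.1 N hN (by rw [i.rank_eq]; exact h0)]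
      · have hrN : N.rank = M.rank := i.rank_eq
        have hS : ∑ F ∈ M.flats.erase ∅,
              ((M.localization F).charPoly.map (Int.castRingHom ℚ))
                * ((P (M.restrictionAt F)).map (Int.castRingHom ℚ))
            = ∑ G ∈ N.flats.erase ∅,
              ((N.localization G).charPoly.map (Int.castRingHom ℚ))
                * ((P (N.restrictionAt G)).map (Int.castRingHom ℚ)) := by
          refine Finset.sum_nbij' (fun F => F.image i.e) (fun G => G.image i.e.symm)
            ?_ ?_ ?_ ?_ ?_
          · intro F hF
            obtain ⟨hFne, hFf⟩ := Finset.mem_erase.mp hF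
            refine Finset.mem_erase.mpr ⟨?_, Iso.mem_flats.mpr (i.isFlat_image
              (Iso.mem_flats.mp hFf))⟩
            intro hc
            apply hFne
            have := congrArg (fun T => T.image i.e.symm) hc
            simp only [Finset.image_empty] at this
            rw [i.img_symm_img] at this
            exact this
          · intro G hG
            obtain ⟨hGne, hGf⟩ := Finset.mem_erase.mp hG
            refine Finset.mem_erase.mpr ⟨?_, Iso.mem_flats.mpr (i.symm.isFlat_image
              (Iso.mem_flats.mp hGf))⟩
            intro hc
            apply hGne
            have := congrArg (fun T => T.image i.e) hc
            simp only [Finset.image_empty] at this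
            rw [i.img_img_symm] at this
            exact this
          · intro F _; exact i.img_symm_img F
          · intro G _; exact i.img_img_symm G
          · intro F hF
            obtain ⟨hFne, hFf⟩ := Finset.mem_erase.mp hF
            have hchar := (i.localizationIso F).charPoly_eq
            have hPeq : P (M.restrictionAt F) = P (N.restrictionAt (F.image i.e)) := by
              obtain ⟨x, hx⟩ := Finset.nonempty_iff_ne_empty.mpr hFne
              refine ih (M.restrictionAt F) (N.restrictionAt (F.image i.e)) ?_
                (i.restrictionAtIso F)
                (loopless_restrictionAt M hM (Iso.mem_flats.mp hFf))
              have hlt : Fintype.card {y : M.E // y ∉ F} < Fintype.card M.E :=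
                Fintype.card_subtype_lt (x := x) (by simp [hx])
              have : Fintype.card (M.restrictionAt F).E = Fintype.card {y : M.E // y ∉ F} := rfl
              omega
            rw [hchar, hPeq]
        have hcoeffs : ∀ j : ℕ, ((P M).map (Int.castRingHom ℚ)).coeff j
            = ((P N).map (Int.castRingHom ℚ)).coeff j := by
          intro j
          rw [kl_coeff_eq P hP M hM hr j, kl_coeff_eq P hP N hN (by omega) j, hrN, hS]
        have hmapeq : (P M).map (Int.castRingHom ℚ) = (P N).map (Int.castRingHom ℚ) :=
          Polynomial.ext hcoeffs
        exact Polynomial.map_injective _ Int.cast_injective hmapeq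

lemma kl_iso (P : FinMatroid → Polynomial ℤ) (hP : IsKLFamily P)
    (M N : FinMatroid) (i : Iso M N) (hM : M.Loopless) : P M = P N :=
  kl_iso_aux P hP (Fintype.card M.E) M N le_rfl i hM

end FinMatroid

/-- The Kazhdan–Lusztig polynomial is multiplicative on direct sums:
`P_{M₁ ⊕ M₂}(t) = P_{M₁}(t) · P_{M₂}(t)`. -/
theorem kl_directSum (P : FinMatroid → Polynomial ℤ) (hP : FinMatroid.IsKLFamily P)
    (M₁ M₂ : FinMatroid) (h₁ : M₁.Loopless) (h₂ : M₂.Loopless) :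
    P (M₁.directSum M₂) = P M₁ * P M₂ := by
  open FinMatroid Polynomial in
  suffices h : ∀ n : ℕ, ∀ M₁ M₂ : FinMatroid, M₁.Loopless → M₂.Loopless →
      Fintype.card M₁.E + Fintype.card M₂.E ≤ n → P (M₁.directSum M₂) = P M₁ * P M₂ by
    exact h (Fintype.card M₁.E + Fintype.card M₂.E) M₁ M₂ h₁ h₂ le_rfl
  intro n
  induction n with
  | zero =>
      intro M₁ M₂ h₁ h₂ hcard
      have hE1 : IsEmpty M₁.E := Fintype.card_eq_zero_iff.mp (by omega)
      have hE2 : IsEmpty M₂.E := Fintype.card_eq_zero_iff.mp (by omega)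
      have hD := loopless_directSum h₁ h₂
      rw [hP.1 _ hD (by rw [FinMatroid.rank_directSum, rank_eq_zero_of_isEmpty M₁ hE1,
            rank_eq_zero_of_isEmpty M₂ hE2]),
        hP.1 M₁ h₁ (rank_eq_zero_of_isEmpty M₁ hE1),
        hP.1 M₂ h₂ (rank_eq_zero_of_isEmpty M₂ hE2)]
      ring
  | succ n ih =>
      intro M₁ M₂ h₁ h₂ hcard
      have hD : (M₁.directSum M₂).Loopless := loopless_directSum h₁ h₂
      rcases Nat.eq_zero_or_pos M₁.rank with hr1 | hr1
      · have hE1 := isEmpty_of_rank_eq_zero M₁ h₁ hr1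
        rw [kl_iso P hP _ _ (emptySumIsoRight hE1) hD, hP.1 M₁ h₁ hr1, one_mul]
      rcases Nat.eq_zero_or_pos M₂.rank with hr2 | hr2
      · have hE2 := isEmpty_of_rank_eq_zero M₂ h₂ hr2
        rw [kl_iso P hP _ _ (emptySumIsoLeft hE2) hD, hP.1 M₂ h₂ hr2, mul_one]
      -- main case: both ranks positive
      have hrD : 0 < (M₁.directSum M₂).rank := by rw [FinMatroid.rank_directSum]; omega
      have hA := sum_flats_eq_reflect P hP (M₁.directSum M₂) hD
      rw [FinMatroid.rank_directSum] at hA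
      -- Step A: reindex over pairs of flats
      have hstep1 : ∑ F ∈ (M₁.directSum M₂).flats,
            (((M₁.directSum M₂).localization F).charPoly.map (Int.castRingHom ℚ))
              * ((P ((M₁.directSum M₂).restrictionAt F)).map (Int.castRingHom ℚ))
          = ∑ p ∈ M₁.flats ×ˢ M₂.flats,
              ((((M₁.localization p.1).charPoly.map (Int.castRingHom ℚ))
                * ((M₂.localization p.2).charPoly.map (Int.castRingHom ℚ)))
              * ((P ((M₁.directSum M₂).restrictionAt (p.1.disjSum p.2))).map
                  (Int.castRingHom ℚ))) := by
        refine Finset.sum_nbij' (fun F => (F.toLeft, F.toRight)) (fun p => p.1.disjSum p.2)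
          ?_ ?_ ?_ ?_ ?_
        · intro F hF
          obtain ⟨hh1, hh2⟩ := (isFlat_directSum F).mp (Iso.mem_flats.mp hF)
          exact Finset.mem_product.mpr ⟨Iso.mem_flats.mpr hh1, Iso.mem_flats.mpr hh2⟩
        · intro p hp
          obtain ⟨hp1, hp2⟩ := Finset.mem_product.mp hp
          rw [Iso.mem_flats, isFlat_directSum]
          simp only [Finset.toLeft_disjSum, Finset.toRight_disjSum]
          exact ⟨Iso.mem_flats.mp hp1, Iso.mem_flats.mp hp2⟩
        · intro F _; exact Finset.toLeft_disjSum_toRight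
        · intro p _; simp [Finset.toLeft_disjSum, Finset.toRight_disjSum]
        · intro F hF
          dsimp only
          have hchar : ((M₁.directSum M₂).localization F).charPoly
              = (M₁.localization F.toLeft).charPoly
                * (M₂.localization F.toRight).charPoly := by
            have hiso := (locDirectSumIso (M := M₁) (N := M₂) F.toLeft F.toRight).charPoly_eq
            rw [Finset.toLeft_disjSum_toRight] at hiso
            rw [← hiso]
            exact charPoly_directSum (loopless_localization M₁ h₁ F.toLeft)
              (loopless_localization M₂ h₂ F.toRight)
          rw [Finset.toLeft_disjSum_toRight, hchar, Polynomial.map_mul]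
      have hA2 := hstep1.symm.trans hA
      -- Step B: split off the (∅,∅) term
      have hmem : ((∅ : Finset M₁.E), (∅ : Finset M₂.E)) ∈ M₁.flats ×ˢ M₂.flats :=
        Finset.mem_product.mpr ⟨empty_mem_flats M₁ h₁, empty_mem_flats M₂ h₂⟩
      rw [← Finset.add_sum_erase _ _ hmem] at hA2
      have hterm1 : ((M₁.localization (∅ : Finset M₁.E)).charPoly.map
          (Int.castRingHom ℚ)) = 1 := by
        rw [charPoly_localization_empty]; exact Polynomial.map_one _
      have hterm2 : ((M₂.localization (∅ : Finset M₂.E)).charPoly.map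
          (Int.castRingHom ℚ)) = 1 := by
        rw [charPoly_localization_empty]; exact Polynomial.map_one _
      have hds : ((∅ : Finset M₁.E).disjSum (∅ : Finset M₂.E))
          = (∅ : Finset (M₁.E ⊕ M₂.E)) := by
        ext x; cases x <;> simp
      have hPD0 : P ((M₁.directSum M₂).restrictionAt (∅ : Finset (M₁.E ⊕ M₂.E)))
          = P (M₁.directSum M₂) :=
        kl_iso P hP _ _ (restrictEmptyIso _) (loopless_restr_empty _ hD)
      dsimp only at hA2
      rw [hterm1, hterm2, one_mul, one_mul, hds, hPD0] at hA2
      -- hA2 : cP D + ∑_{erase} (χχ)·cP(D^dS) = reflect (r₁+r₂) (cP D)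
      -- Step C: convert the restriction terms on the erased set
      have hstep2 : ∑ p ∈ (M₁.flats ×ˢ M₂.flats).erase (∅, ∅),
            ((((M₁.localization p.1).charPoly.map (Int.castRingHom ℚ))
              * ((M₂.localization p.2).charPoly.map (Int.castRingHom ℚ)))
            * ((P ((M₁.directSum M₂).restrictionAt (p.1.disjSum p.2))).map
                (Int.castRingHom ℚ)))
          = ∑ p ∈ (M₁.flats ×ˢ M₂.flats).erase (∅, ∅),
            ((((M₁.localization p.1).charPoly.map (Int.castRingHom ℚ))
                * ((P (M₁.restrictionAt p.1)).map (Int.castRingHom ℚ)))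
              * (((M₂.localization p.2).charPoly.map (Int.castRingHom ℚ))
                * ((P (M₂.restrictionAt p.2)).map (Int.castRingHom ℚ)))) := by
        refine Finset.sum_congr rfl (fun p hp => ?_)
        obtain ⟨hpne, hpmem⟩ := Finset.mem_erase.mp hp
        obtain ⟨hp1, hp2⟩ := Finset.mem_product.mp hpmem
        have hflat : (M₁.directSum M₂).IsFlat (p.1.disjSum p.2) := by
          rw [isFlat_directSum]
          simp only [Finset.toLeft_disjSum, Finset.toRight_disjSum]
          exact ⟨Iso.mem_flats.mp hp1, Iso.mem_flats.mp hp2⟩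
        have hne : p.1 ≠ ∅ ∨ p.2 ≠ ∅ := by
          by_contra hc
          push_neg at hc
          exact hpne (Prod.ext hc.1 hc.2)
        have hcard1 : Fintype.card (M₁.restrictionAt p.1).E
            = Fintype.card {y : M₁.E // y ∉ p.1} := rfl
        have hcard2 : Fintype.card (M₂.restrictionAt p.2).E
            = Fintype.card {y : M₂.E // y ∉ p.2} := rfl
        have hle1 : Fintype.card {y : M₁.E // y ∉ p.1} ≤ Fintype.card M₁.E :=
          Fintype.card_subtype_le _
        have hle2 : Fintype.card {y : M₂.E // y ∉ p.2} ≤ Fintype.card M₂.E :=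
          Fintype.card_subtype_le _
        have hcards : Fintype.card (M₁.restrictionAt p.1).E
            + Fintype.card (M₂.restrictionAt p.2).E ≤ n := by
          rcases hne with hne | hne
          · obtain ⟨x, hx⟩ := Finset.nonempty_iff_ne_empty.mpr hne
            have hlt : Fintype.card {y : M₁.E // y ∉ p.1} < Fintype.card M₁.E :=
              Fintype.card_subtype_lt (x := x) (by simp [hx])
            omega
          · obtain ⟨x, hx⟩ := Finset.nonempty_iff_ne_empty.mpr hne
            have hlt : Fintype.card {y : M₂.E // y ∉ p.2} < Fintype.card M₂.E :=
              Fintype.card_subtype_lt (x := x) (by simp [hx])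
            omega
        have hPres : P ((M₁.directSum M₂).restrictionAt (p.1.disjSum p.2))
            = P (M₁.restrictionAt p.1) * P (M₂.restrictionAt p.2) := by
          rw [kl_iso P hP _ _ (restrDirectSumIso p.1 p.2)
            (loopless_restrictionAt _ hD hflat)]
          exact ih (M₁.restrictionAt p.1) (M₂.restrictionAt p.2)
            (loopless_restrictionAt M₁ h₁ (Iso.mem_flats.mp hp1))
            (loopless_restrictionAt M₂ h₂ (Iso.mem_flats.mp hp2)) hcards
        rw [hPres, Polynomial.map_mul]
        ring
      -- Step D: full product sum
      have hprodsum : ∑ p ∈ M₁.flats ×ˢ M₂.flats,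
            ((((M₁.localization p.1).charPoly.map (Int.castRingHom ℚ))
                * ((P (M₁.restrictionAt p.1)).map (Int.castRingHom ℚ)))
              * (((M₂.localization p.2).charPoly.map (Int.castRingHom ℚ))
                * ((P (M₂.restrictionAt p.2)).map (Int.castRingHom ℚ))))
          = Polynomial.reflect M₁.rank ((P M₁).map (Int.castRingHom ℚ))
            * Polynomial.reflect M₂.rank ((P M₂).map (Int.castRingHom ℚ)) := by
        rw [Finset.sum_product]
        dsimp only
        rw [← Finset.sum_mul_sum]
        rw [sum_flats_eq_reflect P hP M₁ h₁, sum_flats_eq_reflect P hP M₂ h₂]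
      have hP10 : P (M₁.restrictionAt (∅ : Finset M₁.E)) = P M₁ :=
        kl_iso P hP _ _ (restrictEmptyIso M₁) (loopless_restr_empty M₁ h₁)
      have hP20 : P (M₂.restrictionAt (∅ : Finset M₂.E)) = P M₂ :=
        kl_iso P hP _ _ (restrictEmptyIso M₂) (loopless_restr_empty M₂ h₂)
      have herase' : ∑ p ∈ (M₁.flats ×ˢ M₂.flats).erase (∅, ∅),
            ((((M₁.localization p.1).charPoly.map (Int.castRingHom ℚ))
                * ((P (M₁.restrictionAt p.1)).map (Int.castRingHom ℚ)))
              * (((M₂.localization p.2).charPoly.map (Int.castRingHom ℚ))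
                * ((P (M₂.restrictionAt p.2)).map (Int.castRingHom ℚ))))
          = Polynomial.reflect M₁.rank ((P M₁).map (Int.castRingHom ℚ))
              * Polynomial.reflect M₂.rank ((P M₂).map (Int.castRingHom ℚ))
            - ((P M₁).map (Int.castRingHom ℚ)) * ((P M₂).map (Int.castRingHom ℚ)) := by
        have h := Finset.add_sum_erase (M₁.flats ×ˢ M₂.flats)
          (fun p => (((M₁.localization p.1).charPoly.map (Int.castRingHom ℚ))
                * ((P (M₁.restrictionAt p.1)).map (Int.castRingHom ℚ)))
              * (((M₂.localization p.2).charPoly.map (Int.castRingHom ℚ))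
                * ((P (M₂.restrictionAt p.2)).map (Int.castRingHom ℚ)))) hmem
        dsimp only at h
        rw [hterm1, hterm2, hP10, hP20, one_mul, one_mul] at h
        rw [hprodsum] at h
        linear_combination h
      -- natDegree bounds for reflect_mul
      have hdeg1 : ((P M₁).map (Int.castRingHom ℚ)).natDegree ≤ M₁.rank :=
        le_trans Polynomial.natDegree_map_le (natDegree_P_le P hP M₁ h₁)
      have hdeg2 : ((P M₂).map (Int.castRingHom ℚ)).natDegree ≤ M₂.rank :=
        le_trans Polynomial.natDegree_map_le (natDegree_P_le P hP M₂ h₂)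
      have hreflmul := Polynomial.reflect_mul ((P M₁).map (Int.castRingHom ℚ))
        ((P M₂).map (Int.castRingHom ℚ)) hdeg1 hdeg2
      -- assemble the key identity
      have heq : Polynomial.reflect (M₁.rank + M₂.rank)
            ((P (M₁.directSum M₂)).map (Int.castRingHom ℚ))
          = ((P (M₁.directSum M₂)).map (Int.castRingHom ℚ))
            + (Polynomial.reflect (M₁.rank + M₂.rank)
                (((P M₁).map (Int.castRingHom ℚ)) * ((P M₂).map (Int.castRingHom ℚ)))
              - ((P M₁).map (Int.castRingHom ℚ)) * ((P M₂).map (Int.castRingHom ℚ))) := by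
        rw [hreflmul]
        linear_combination hA2.symm + hstep2 + herase'
      -- coefficient bounds
      have hAhigh : ∀ k : ℕ, M₁.rank + M₂.rank ≤ 2 * k →
          ((P (M₁.directSum M₂)).map (Int.castRingHom ℚ)).coeff k = 0 := by
        intro k hk
        rw [Polynomial.coeff_map, hP.2.1 _ hD hrD k (by rw [FinMatroid.rank_directSum]; exact hk)]
        simp
      have hd1 : 2 * ((P M₁).map (Int.castRingHom ℚ)).natDegree < M₁.rank
          ∨ ((P M₁).map (Int.castRingHom ℚ)) = 0 := by
        by_cases hz : ((P M₁).map (Int.castRingHom ℚ)) = 0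
        · exact Or.inr hz
        · left
          by_contra hcon
          push_neg at hcon
          have h0 := hP.2.1 M₁ h₁ hr1 (((P M₁).map (Int.castRingHom ℚ)).natDegree) hcon
          have hc0 : ((P M₁).map (Int.castRingHom ℚ)).coeff
              (((P M₁).map (Int.castRingHom ℚ)).natDegree) = 0 := by
            rw [Polynomial.coeff_map, h0]; simp
          exact hz (Polynomial.leadingCoeff_eq_zero.mp hc0)
      have hd2 : 2 * ((P M₂).map (Int.castRingHom ℚ)).natDegree < M₂.rank
          ∨ ((P M₂).map (Int.castRingHom ℚ)) = 0 := by
        by_cases hz : ((P M₂).map (Int.castRingHom ℚ)) = 0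
        · exact Or.inr hz
        · left
          by_contra hcon
          push_neg at hcon
          have h0 := hP.2.1 M₂ h₂ hr2 (((P M₂).map (Int.castRingHom ℚ)).natDegree) hcon
          have hc0 : ((P M₂).map (Int.castRingHom ℚ)).coeff
              (((P M₂).map (Int.castRingHom ℚ)).natDegree) = 0 := by
            rw [Polynomial.coeff_map, h0]; simp
          exact hz (Polynomial.leadingCoeff_eq_zero.mp hc0)
      have hBhigh : ∀ k : ℕ, M₁.rank + M₂.rank ≤ 2 * k →
          (((P M₁).map (Int.castRingHom ℚ)) * ((P M₂).map (Int.castRingHom ℚ))).coeff k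
            = 0 := by
        intro k hk
        rcases hd1 with hd1 | hz
        · rcases hd2 with hd2 | hz
          · apply Polynomial.coeff_eq_zero_of_natDegree_lt
            have hmul := Polynomial.natDegree_mul_le
              (p := (P M₁).map (Int.castRingHom ℚ)) (q := (P M₂).map (Int.castRingHom ℚ))
            omega
          · rw [hz, mul_zero]; simp
        · rw [hz, zero_mul]; simp
      -- symmetry forces equality of coefficients
      have hcoeffAB : ∀ j : ℕ, ((P (M₁.directSum M₂)).map (Int.castRingHom ℚ)).coeff j
          = (((P M₁).map (Int.castRingHom ℚ)) * ((P M₂).map (Int.castRingHom ℚ))).coeff j := by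
        intro j
        rcases le_or_gt (M₁.rank + M₂.rank) (2 * j) with hj | hj
        · rw [hAhigh j hj, hBhigh j hj]
        · have hcongr := congrArg (fun p => Polynomial.coeff p j) heq
          simp only [Polynomial.coeff_reflect, Polynomial.coeff_add,
            Polynomial.coeff_sub] at hcongr
          rw [Polynomial.revAt_le (by omega : j ≤ M₁.rank + M₂.rank)] at hcongr
          have h2 : M₁.rank + M₂.rank ≤ 2 * (M₁.rank + M₂.rank - j) := by omega
          rw [hAhigh _ h2, hBhigh _ h2] at hcongr
          linarith [hcongr]
      have hABeq : (P (M₁.directSum M₂)).map (Int.castRingHom ℚ)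
          = ((P M₁).map (Int.castRingHom ℚ)) * ((P M₂).map (Int.castRingHom ℚ)) :=
        Polynomial.ext hcoeffAB
      have hmapeq : (P (M₁.directSum M₂)).map (Int.castRingHom ℚ)
          = (P M₁ * P M₂).map (Int.castRingHom ℚ) := by
        rw [Polynomial.map_mul]; exact hABeq
      exact Polynomial.map_injective _ Int.cast_injective hmapeq
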